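/- arXiv:2104.11439 — 8 statements merged into one kernel-verified Lean document; each statement's English description precedes it below -/
import Mathlib

section
/- Let R be a commutative Bézout domain of stable range 1.5, m ∈ R neither zero nor a unit, and R_m = R/mR. If a, b ∈ R_m are such that the linear equation b = a·x is solvable in R_m, then there exists a solution c ∈ R_m (i.e., b = a·c) such that c divides every solution of this equation (such a solution is called a generating solution). -/
/-!
The solutions of `b = a x` in `R/mR` form the coset `x₀ + Ann(a)`, and in a Bézout domain
`Ann(a)` is generated by the image of `n = m / gcd(a, m)`. So it suffices to choose the
representative `c = x₀ + n r` of the coset so that `c ∣ n` in `R/mR`, i.e. so that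
`gcd(c, m) ∣ n`. Writing `x₀ = e x'` and `n = e n'` with `x'`, `n'` coprime, stable range 1.5
gives `r` with `x' + n' r` coprime to `m`; then every common divisor of `c = e (x' + n' r)`
and `m` divides `e`, hence `n`.
-/

/-- A commutative ring has stable range 1.5 if for all `a b c` with `c ≠ 0` and
`gcd(a, b, c)` a unit (i.e. every common divisor of `a`, `b`, `c` is a unit),
there exists `r` such that `gcd(a + b*r, c)` is a unit. -/
def HasStableRange15 (R : Type*) [CommRing R] : Prop :=
  ∀ a b c : R, c ≠ 0 → (∀ d : R, d ∣ a → d ∣ b → d ∣ c → IsUnit d) →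
    ∃ r : R, ∀ d : R, d ∣ a + b * r → d ∣ c → IsUnit d

namespace IsBezout

variable {R : Type*} [CommRing R] [IsBezout R]

theorem exists_eq_mul_isRelPrime [IsDomain R] (x y : R) :
    ∃ g x' y', x = g * x' ∧ y = g * y' ∧ IsRelPrime x' y' := by
  classical
  let := toGCDDomain R
  obtain ⟨x', y', hx, hy, hu⟩ := extract_gcd x y
  exact ⟨_, x', y', hx, hy, gcd_isUnit_iff_isRelPrime.mp hu⟩

theorem exists_forall_dvd_mul_iff_dvd [IsDomain R] {m : R} (hm : m ≠ 0) (a : R) :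
    ∃ n : R, ∀ y : R, m ∣ a * y ↔ n ∣ y := by
  obtain ⟨d, a', n, rfl, rfl, hrel⟩ := exists_eq_mul_isRelPrime a m
  have hd : d ≠ 0 := left_ne_zero_of_mul hm
  refine ⟨n, fun y => ?_⟩
  rw [mul_assoc, mul_dvd_mul_iff_left hd]
  exact ⟨hrel.symm.dvd_of_dvd_mul_left, fun h => h.mul_left a'⟩

theorem mk_dvd_mk_of_forall_dvd {m c n : R} (h : ∀ g, g ∣ c → g ∣ m → g ∣ n) :
    Ideal.Quotient.mk (Ideal.span {m}) c ∣ Ideal.Quotient.mk (Ideal.span {m}) n := by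
  obtain ⟨z, w, hzw⟩ := gcd_eq_sum c m
  obtain ⟨k, hk⟩ := h _ (gcd_dvd_left c m) (gcd_dvd_right c m)
  refine ⟨Ideal.Quotient.mk _ (z * k), ?_⟩
  rw [← map_mul, Ideal.Quotient.eq, Ideal.mem_span_singleton]
  exact ⟨w * k, by linear_combination hk - k * hzw⟩

end IsBezout

theorem HasStableRange15.exists_forall_dvd_of_dvd_add_mul {R : Type*} [CommRing R] [IsDomain R]
    [IsBezout R] (hsr : HasStableRange15 R) {m : R} (hm : m ≠ 0) (x n : R) :
    ∃ r, ∀ g, g ∣ x + n * r → g ∣ m → g ∣ n := by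
  obtain ⟨e, x', n', rfl, rfl, hrel⟩ := IsBezout.exists_eq_mul_isRelPrime x n
  obtain ⟨r, hr⟩ := hsr x' n' m hm fun g hx hn _ => hrel hx hn
  obtain ⟨p, q, hpq⟩ := (show IsRelPrime (x' + n' * r) m from fun _ => hr _).isCoprime
  refine ⟨r, fun g hg hgm => ?_⟩
  have hge : g ∣ e := by
    have he : e = (e * x' + e * n' * r) * p + e * m * q := by linear_combination -e * hpq
    rw [he]
    exact dvd_add (hg.mul_right p) ((hgm.mul_left e).mul_right q)
  exact hge.mul_right n'

theorem exists_generating_solution_general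
    {R : Type*} [CommRing R] [IsDomain R] [IsBezout R]
    (hsr : HasStableRange15 R)
    (m : R) (hm0 : m ≠ 0)
    (a b : R ⧸ Ideal.span {m})
    (hsolv : ∃ x : R ⧸ Ideal.span {m}, b = a * x) :
    ∃ c : R ⧸ Ideal.span {m}, b = a * c ∧
      ∀ x : R ⧸ Ideal.span {m}, b = a * x → c ∣ x := by
  obtain ⟨x₀, rfl⟩ := hsolv
  obtain ⟨A, rfl⟩ := Ideal.Quotient.mk_surjective a
  obtain ⟨X₀, rfl⟩ := Ideal.Quotient.mk_surjective x₀
  set π := Ideal.Quotient.mk (Ideal.span {m})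
  obtain ⟨n, hann⟩ := IsBezout.exists_forall_dvd_mul_iff_dvd hm0 A
  obtain ⟨r, hr⟩ := hsr.exists_forall_dvd_of_dvd_add_mul hm0 X₀ n
  have hAn : π A * π n = 0 := by
    rw [← map_mul, Ideal.Quotient.eq_zero_iff_dvd]
    exact (hann n).2 dvd_rfl
  have hcn : π (X₀ + n * r) ∣ π n := IsBezout.mk_dvd_mk_of_forall_dvd hr
  refine ⟨π (X₀ + n * r), by simp only [map_add, map_mul]; linear_combination -π r * hAn,
    fun x hx => ?_⟩
  obtain ⟨X, rfl⟩ := Ideal.Quotient.mk_surjective x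
  obtain ⟨t, ht⟩ := (hann (X - X₀)).1 <| by
    rw [← Ideal.Quotient.eq_zero_iff_dvd, map_mul, map_sub, mul_sub, ← hx, sub_self]
  have hX : π X = π (X₀ + n * r) + π n * π (t - r) := by
    rw [← map_mul, ← map_add]
    congr 1
    linear_combination ht
  rw [hX]
  exact dvd_add dvd_rfl (hcn.mul_right _)

/-- Every solvable linear equation `b = a * x` in `R/mR` has a generating solution,
i.e. a solution dividing every solution. -/
theorem exists_generating_solution
    {R : Type*} [CommRing R] [IsDomain R] [IsBezout R]
    (hsr : HasStableRange15 R)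
    (m : R) (hm0 : m ≠ 0) (hmu : ¬ IsUnit m)
    (a b : R ⧸ Ideal.span {m})
    (hsolv : ∃ x : R ⧸ Ideal.span {m}, b = a * x) :
    ∃ c : R ⧸ Ideal.span {m}, b = a * c ∧
      ∀ x : R ⧸ Ideal.span {m}, b = a * x → c ∣ x :=
  exists_generating_solution_general hsr m hm0 a b hsolv
end

section
/- Let R be a commutative Bézout domain of stable range 1.5, m ∈ R neither zero nor a unit, and R_m = R/mR. If c and c′ are both generating solutions of a solvable linear equation b = a·x in R_m (that is, b = a·c, b = a·c′, and each of c, c′ divides every solution of the equation), then c and c′ are associates in R_m, i.e., c′ = c·u for some unit u of R_m. -/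
def HasStableRangeOne (Q : Type*) [CommRing Q] : Prop :=
  ∀ s y : Q, IsCoprime s y → ∃ r : Q, IsUnit (s + y * r)

theorem HasStableRangeOne.associated_of_dvd_dvd {Q : Type*} [CommRing Q]
    (hQ : HasStableRangeOne Q) {c c' : Q} (hcc' : c ∣ c') (hc'c : c' ∣ c) : Associated c c' := by
  obtain ⟨s, rfl⟩ := hcc'
  obtain ⟨t, ht⟩ := hc'c
  have hann : c * (1 - s * t) = 0 := by linear_combination ht
  obtain ⟨r, u, hu⟩ := hQ s (1 - s * t) ⟨t, 1, by ring⟩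
  exact ⟨u, by rw [hu]; linear_combination r * hann⟩

theorem Ideal.Quotient.isUnit_mk_of_isCoprime {R : Type*} [CommRing R] {a m : R}
    (h : IsCoprime a m) : IsUnit (Ideal.Quotient.mk (Ideal.span {m}) a) := by
  have := h.map (Ideal.Quotient.mk (Ideal.span {m}))
  rwa [Ideal.Quotient.mk_singleton_self, isCoprime_zero_right] at this

theorem Ideal.Quotient.isUnit_of_dvd_of_isCoprime_mk {R : Type*} [CommRing R] {m S Y d : R}
    (h : IsCoprime (Ideal.Quotient.mk (Ideal.span {m}) S) (Ideal.Quotient.mk _ Y))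
    (hS : d ∣ S) (hY : d ∣ Y) (hm : d ∣ m) : IsUnit d := by
  obtain ⟨t, w, htw⟩ := h
  obtain ⟨T, rfl⟩ := Ideal.Quotient.mk_surjective t
  obtain ⟨W, rfl⟩ := Ideal.Quotient.mk_surjective w
  have hmdvd : m ∣ T * S + W * Y - 1 := by
    rw [← Ideal.mem_span_singleton, ← Ideal.Quotient.mk_eq_mk_iff_sub_mem]
    simpa using htw
  have hd : d ∣ T * S + W * Y - (T * S + W * Y - 1) :=
    dvd_sub ((hS.mul_left T).add (hY.mul_left W)) (hm.trans hmdvd)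
  exact isUnit_of_dvd_one (by simpa using hd)

theorem HasStableRange15.hasStableRangeOne_quotient {R : Type*} [CommRing R] [IsBezout R]
    (hsr : HasStableRange15 R) {m : R} (hm0 : m ≠ 0) :
    HasStableRangeOne (R ⧸ Ideal.span {m}) := by
  intro s y hsy
  obtain ⟨S, rfl⟩ := Ideal.Quotient.mk_surjective s
  obtain ⟨Y, rfl⟩ := Ideal.Quotient.mk_surjective y
  obtain ⟨r, hr⟩ := hsr S Y m hm0 fun d => Ideal.Quotient.isUnit_of_dvd_of_isCoprime_mk hsy
  refine ⟨Ideal.Quotient.mk _ r, ?_⟩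
  have hcop : IsCoprime (S + Y * r) m := IsRelPrime.isCoprime fun d => hr d
  simpa using Ideal.Quotient.isUnit_mk_of_isCoprime hcop

theorem generating_solutions_associates_general
    {R : Type*} [CommRing R] [IsBezout R]
    (hsr : HasStableRange15 R)
    (m : R) (hm0 : m ≠ 0)
    (a b c c' : R ⧸ Ideal.span {m})
    (hc : b = a * c) (hcgen : ∀ x : R ⧸ Ideal.span {m}, b = a * x → c ∣ x)
    (hc' : b = a * c') (hc'gen : ∀ x : R ⧸ Ideal.span {m}, b = a * x → c' ∣ x) :
    ∃ u : (R ⧸ Ideal.span {m})ˣ, c' = c * u := by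
  obtain ⟨u, hu⟩ :=
    (hsr.hasStableRangeOne_quotient hm0).associated_of_dvd_dvd (hcgen c' hc') (hc'gen c hc)
  exact ⟨u, hu.symm⟩

/-- Any two generating solutions of a solvable linear equation `b = a * x` in `R/mR`
are associates. -/
theorem generating_solutions_associates
    {R : Type*} [CommRing R] [IsDomain R] [IsBezout R]
    (hsr : HasStableRange15 R)
    (m : R) (hm0 : m ≠ 0) (hmu : ¬ IsUnit m)
    (a b c c' : R ⧸ Ideal.span {m})
    (hc : b = a * c) (hcgen : ∀ x : R ⧸ Ideal.span {m}, b = a * x → c ∣ x)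
    (hc' : b = a * c') (hc'gen : ∀ x : R ⧸ Ideal.span {m}, b = a * x → c' ∣ x) :
    ∃ u : (R ⧸ Ideal.span {m})ˣ, c' = c * u :=
  generating_solutions_associates_general hsr m hm0 a b c c' hc hcgen hc' hc'gen
end

section
/- Let R be a commutative Bézout domain of stable range 1.5, m ∈ R neither zero nor a unit, and R_m = R/mR, with x̄ the image of x ∈ R in R_m. For a, b ∈ R, the elements ā and b̄ are associates in R_m (i.e., ā = b̄·ū for some unit ū of R_m) if and only if gcd(a, m) and gcd(b, m) are associates in R. -/
/-!
Two elements that are associated modulo `m` have the same common divisors with `m`, so their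
gcds with `m` are associates. Conversely, write `a = d a'` and `m = d m'` with `d = gcd(a, m)`;
then `a'` and `m'` are coprime, stable range 1.5 gives `r` with `a' + m' r` coprime to `m`, and
`a ≡ d (a' + m' r) (mod m)` shows that `ā` is associated to `d̄`.
-/

open Ideal

section CommRing

variable {R : Type*} [CommRing R]

lemma isUnit_mk_span_singleton_of_isCoprime {m x : R} (h : IsCoprime x m) :
    IsUnit (Ideal.Quotient.mk (span {m}) x) := by
  have h' := h.map (Ideal.Quotient.mk (span {m}))
  rwa [Ideal.Quotient.mk_singleton_self, isCoprime_zero_right] at h'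

lemma dvd_of_associated_mk {m x y d : R}
    (h : Associated (Ideal.Quotient.mk (span {m}) x) (Ideal.Quotient.mk (span {m}) y))
    (hx : d ∣ x) (hm : d ∣ m) : d ∣ y := by
  obtain ⟨u, hu⟩ := h
  obtain ⟨w, hw⟩ := Ideal.Quotient.mk_surjective (u : R ⧸ span {m})
  have hmod : m ∣ y - x * w := by
    rw [← mem_span_singleton, ← Ideal.Quotient.mk_eq_mk_iff_sub_mem, map_mul, hw, hu]
  exact (dvd_sub_left (hx.mul_right w)).mp (hm.trans hmod)

end CommRing

section Domain

variable {R : Type*} [CommRing R] [IsDomain R]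

lemma isRelPrime_of_gcd_mul {d a m : R} (hd0 : d ≠ 0)
    (hgcd : ∀ x : R, x ∣ d * a → x ∣ d * m → x ∣ d) : IsRelPrime a m := by
  intro e hea hem
  have hde : d * e ∣ d * 1 := by
    rw [mul_one]; exact hgcd _ (mul_dvd_mul_left d hea) (mul_dvd_mul_left d hem)
  exact isUnit_of_dvd_one ((mul_dvd_mul_iff_left hd0).mp hde)

lemma associated_mk_gcd [IsBezout R] (hsr : HasStableRange15 R) {m a d : R} (hm0 : m ≠ 0)
    (hda : d ∣ a) (hdm : d ∣ m) (hgcd : ∀ x : R, x ∣ a → x ∣ m → x ∣ d) :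
    Associated (Ideal.Quotient.mk (span {m}) d) (Ideal.Quotient.mk (span {m}) a) := by
  obtain ⟨a', rfl⟩ := hda
  obtain ⟨m', rfl⟩ := hdm
  have hcop : IsRelPrime a' m' := isRelPrime_of_gcd_mul (left_ne_zero_of_mul hm0) hgcd
  obtain ⟨r, hr⟩ := hsr a' m' (d * m') hm0 fun e hea hem _ ↦ hcop hea hem
  have hunit := isUnit_mk_span_singleton_of_isCoprime (IsRelPrime.isCoprime fun _ ↦ hr _)
  refine ⟨hunit.unit, ?_⟩
  rw [IsUnit.unit_spec, ← map_mul, Ideal.Quotient.mk_eq_mk_iff_sub_mem, mem_span_singleton]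
  exact ⟨r, by ring⟩

end Domain

theorem quotient_associates_iff_gcd_associates_general
    {R : Type*} [CommRing R] [IsDomain R] [IsBezout R]
    (hsr : HasStableRange15 R)
    (m : R) (hm0 : m ≠ 0)
    (a b : R)
    (da : R) (hda1 : da ∣ a) (hda2 : da ∣ m) (hda3 : ∀ x : R, x ∣ a → x ∣ m → x ∣ da)
    (db : R) (hdb1 : db ∣ b) (hdb2 : db ∣ m) (hdb3 : ∀ x : R, x ∣ b → x ∣ m → x ∣ db) :
    (∃ u : (R ⧸ Ideal.span {m})ˣ,
        Ideal.Quotient.mk (Ideal.span {m}) a = Ideal.Quotient.mk (Ideal.span {m}) b * u) ↔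
      (∃ u : Rˣ, da = db * u) := by
  constructor
  · rintro ⟨u, hu⟩
    have hba : Associated (Ideal.Quotient.mk (span {m}) b) (Ideal.Quotient.mk (span {m}) a) :=
      ⟨u, hu.symm⟩
    obtain ⟨v, hv⟩ := associated_of_dvd_dvd
      (hda3 db (dvd_of_associated_mk hba hdb1 hdb2) hdb2)
      (hdb3 da (dvd_of_associated_mk hba.symm hda1 hda2) hda2)
    exact ⟨v, hv.symm⟩
  · rintro ⟨v, hv⟩
    have hdb : Associated db da := ⟨v, hv.symm⟩
    obtain ⟨u, hu⟩ := (associated_mk_gcd hsr hm0 hdb1 hdb2 hdb3).symm.trans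
      ((hdb.map (Ideal.Quotient.mk (span {m}))).trans (associated_mk_gcd hsr hm0 hda1 hda2 hda3))
    exact ⟨u, hu.symm⟩

/-- `ā` and `b̄` are associates in `R/mR` iff `gcd(a, m)` and `gcd(b, m)` are
associates in `R`. -/
theorem quotient_associates_iff_gcd_associates
    {R : Type*} [CommRing R] [IsDomain R] [IsBezout R]
    (hsr : HasStableRange15 R)
    (m : R) (hm0 : m ≠ 0) (hmu : ¬ IsUnit m)
    (a b : R)
    (da : R) (hda1 : da ∣ a) (hda2 : da ∣ m) (hda3 : ∀ x : R, x ∣ a → x ∣ m → x ∣ da)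
    (db : R) (hdb1 : db ∣ b) (hdb2 : db ∣ m) (hdb3 : ∀ x : R, x ∣ b → x ∣ m → x ∣ db) :
    (∃ u : (R ⧸ Ideal.span {m})ˣ,
        Ideal.Quotient.mk (Ideal.span {m}) a = Ideal.Quotient.mk (Ideal.span {m}) b * u) ↔
      (∃ u : Rˣ, da = db * u) :=
  quotient_associates_iff_gcd_associates_general hsr m hm0 a b da hda1 hda2 hda3 db hdb1 hdb2 hdb3
end

section
/- Let R be a commutative Bézout domain of stable range 1.5, m ∈ R neither zero nor a unit, and R_m = R/mR, with x̄ the image of x ∈ R in R_m. For every a ∈ R there exists a unit ē of R_m such that ā = d̄·ē, where d is a greatest common divisor of a and m in R. -/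
theorem HasStableRange15.exists_isRelPrime_add_mul {R : Type*} [CommRing R]
    (hsr : HasStableRange15 R) {a b c : R} (hc : c ≠ 0) (hab : IsRelPrime a b) :
    ∃ r : R, IsRelPrime (a + b * r) c :=
  hsr a b c hc fun _ ha hb _ ↦ hab ha hb

theorem isRelPrime_of_forall_dvd_mul_left_dvd {R : Type*} [CommMonoidWithZero R]
    [IsLeftCancelMulZero R] {d a m : R} (hd0 : d ≠ 0) (hd : ∀ x : R, x ∣ d * a → x ∣ d * m → x ∣ d) :
    IsRelPrime a m := fun t hta htm ↦ by
  have hdt : d * t ∣ d * 1 := by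
    simpa using hd (d * t) (mul_dvd_mul_left d hta) (mul_dvd_mul_left d htm)
  exact isUnit_of_dvd_one ((mul_dvd_mul_iff_left hd0).mp hdt)

theorem IsCoprime.isUnit_quotient_mk {R : Type*} [CommRing R] {x m : R} (h : IsCoprime x m) :
    IsUnit (Ideal.Quotient.mk (Ideal.span {m}) x) := by
  obtain ⟨u, v, huv⟩ := h
  refine IsUnit.of_mul_eq_one (Ideal.Quotient.mk _ u) ?_
  have hm : Ideal.Quotient.mk (Ideal.span {m}) m = 0 :=
    Ideal.Quotient.eq_zero_iff_mem.mpr (Ideal.mem_span_singleton_self m)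
  rw [mul_comm, ← map_mul, ← map_one (Ideal.Quotient.mk _), ← huv, map_add, map_mul _ v, hm,
    mul_zero, add_zero]

theorem quotient_eq_gcd_mul_unit_general
    {R : Type*} [CommRing R] [IsDomain R] [IsBezout R]
    (hsr : HasStableRange15 R)
    (m : R) (hm0 : m ≠ 0)
    (a : R)
    (d : R) (hd1 : d ∣ a) (hd2 : d ∣ m) (hd3 : ∀ x : R, x ∣ a → x ∣ m → x ∣ d) :
    ∃ e : (R ⧸ Ideal.span {m})ˣ,
      Ideal.Quotient.mk (Ideal.span {m}) a = Ideal.Quotient.mk (Ideal.span {m}) d * e := by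
  obtain ⟨a', rfl⟩ := hd1
  obtain ⟨m', rfl⟩ := hd2
  have hd0 : d ≠ 0 := left_ne_zero_of_mul hm0
  obtain ⟨r, hr⟩ := hsr.exists_isRelPrime_add_mul hm0
    (isRelPrime_of_forall_dvd_mul_left_dvd hd0 hd3)
  obtain ⟨e, he⟩ := hr.isCoprime.isUnit_quotient_mk
  refine ⟨e, ?_⟩
  rw [he, ← map_mul, Ideal.Quotient.eq, Ideal.mem_span_singleton]
  exact ⟨-r, by ring⟩

/-- Every `ā ∈ R/mR` can be written as `d̄ · ē` where `d = gcd(a, m)` and `ē` is a unit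
of `R/mR`. -/
theorem quotient_eq_gcd_mul_unit
    {R : Type*} [CommRing R] [IsDomain R] [IsBezout R]
    (hsr : HasStableRange15 R)
    (m : R) (hm0 : m ≠ 0) (hmu : ¬ IsUnit m)
    (a : R)
    (d : R) (hd1 : d ∣ a) (hd2 : d ∣ m) (hd3 : ∀ x : R, x ∣ a → x ∣ m → x ∣ d) :
    ∃ e : (R ⧸ Ideal.span {m})ˣ,
      Ideal.Quotient.mk (Ideal.span {m}) a = Ideal.Quotient.mk (Ideal.span {m}) d * e :=
  quotient_eq_gcd_mul_unit_general hsr m hm0 a d hd1 hd2 hd3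
end

section
/- Let R be a commutative Bézout domain of stable range 1.5, m ∈ R neither zero nor a unit, and R_m = R/mR. Let φ₁, φ₂, φ₃ ∈ R_m with φ₁ ∣ φ₂ ∣ φ₃ and φ₃ ≠ 0. If ψ₂₁ is a generating solution of the equation φ₂ = φ₁·x and ψ₃₂ is a generating solution of the equation φ₃ = φ₂·x, then the product ψ₂₁·ψ₃₂ is a generating solution of the equation φ₃ = φ₁·x; in particular, for any generating solution ψ₃₁ of φ₃ = φ₁·x there is a unit e of R_m with ψ₂₁·ψ₃₂ = ψ₃₁·e. -/
/-!
Solutions of `b = a * x` form the coset `ψ + Ann a` of any one solution `ψ`, so `ψ` is generating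
exactly when it divides the annihilator of `a`. If `ψ₂₁ ∣ Ann φ₁` and `ψ₃₂ ∣ Ann (φ₁ ψ₂₁)`, then
any `n ∈ Ann φ₁` is `ψ₂₁ k` with `k ∈ Ann (φ₁ ψ₂₁)`, so `ψ₂₁ ψ₃₂ ∣ n`; this part holds in every
commutative ring. Two generating solutions of the same equation thus divide each other, and in
`R/mR` mutually dividing elements are associated: if `x = x c c'` with `c = w̄`, `c' = w̄'`, the
annihilator `(n̄)` of `x` gives `n ∣ 1 - w w'`, so `w` and `n` are coprime and stable range 1.5
yields `r` with `w + n r` invertible modulo `m`, while `x (w + n r) = x c`.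
-/

def IsGeneratingSolution {S : Type*} [CommRing S] (a b ψ : S) : Prop :=
  b = a * ψ ∧ ∀ x, b = a * x → ψ ∣ x

namespace IsGeneratingSolution

variable {S : Type*} [CommRing S] {a b c ψ χ : S}

theorem dvd_of_mul_eq_zero (h : IsGeneratingSolution a b ψ) {n : S} (hn : a * n = 0) : ψ ∣ n :=
  (dvd_add_right dvd_rfl).mp (h.2 (ψ + n) (by rw [mul_add, hn, add_zero, h.1]))

theorem mul (h₁ : IsGeneratingSolution a b ψ) (h₂ : IsGeneratingSolution b c χ) :
    IsGeneratingSolution a c (ψ * χ) := by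
  have hsol : c = a * (ψ * χ) := by rw [h₂.1, h₁.1, mul_assoc]
  refine ⟨hsol, fun x hx => ?_⟩
  obtain ⟨k, hk⟩ := h₁.dvd_of_mul_eq_zero (n := x - ψ * χ) <| by
    rw [mul_sub, ← hx, ← hsol, sub_self]
  have hχk : χ ∣ k := h₂.dvd_of_mul_eq_zero <| by
    rw [h₁.1, mul_assoc, ← hk, mul_sub, ← hx, ← hsol, sub_self]
  rw [← sub_add_cancel x (ψ * χ), hk]
  exact dvd_add (mul_dvd_mul_left ψ hχk) dvd_rfl

end IsGeneratingSolution

open Ideal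

section Quotient

variable {R : Type*} [CommRing R] [IsBezout R]

theorem exists_forall_mk_mul_mk_eq_zero_iff_dvd [IsDomain R] {m : R} (hm : m ≠ 0) (a : R) :
    ∃ n : R, ∀ z : R,
      Ideal.Quotient.mk (span {m}) a * Ideal.Quotient.mk (span {m}) z = 0 ↔ n ∣ z := by
  obtain ⟨u, v, huv⟩ := IsBezout.gcd_eq_sum a m
  obtain ⟨a', ha'⟩ := IsBezout.gcd_dvd_left a m
  obtain ⟨n, hn⟩ := IsBezout.gcd_dvd_right a m
  set g := IsBezout.gcd a m
  have hg : g ≠ 0 := by rintro hg; rw [hg, zero_mul] at hn; exact hm hn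
  have hcop : IsCoprime a' n :=
    ⟨u, v, mul_left_cancel₀ hg (by linear_combination huv - u * ha' - v * hn)⟩
  refine ⟨n, fun z => ?_⟩
  rw [← map_mul, Ideal.Quotient.eq_zero_iff_mem, mem_span_singleton, ha', hn, mul_assoc,
    mul_dvd_mul_iff_left hg]
  exact ⟨hcop.symm.dvd_of_dvd_mul_left, fun h => h.mul_left a'⟩

theorem isUnit_mk_of_isRelPrime {m w : R} (h : IsRelPrime w m) :
    IsUnit (Ideal.Quotient.mk (span {m}) w) := by
  have := h.isCoprime.map (Ideal.Quotient.mk (span {m}))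
  rwa [Ideal.Quotient.mk_singleton_self, isCoprime_zero_right] at this

theorem HasStableRange15.exists_isUnit_mk_add (hsr : HasStableRange15 R) {m : R} (hm : m ≠ 0)
    {w n : R} (h : ∀ d : R, d ∣ w → d ∣ n → d ∣ m → IsUnit d) :
    ∃ r : R, IsUnit (Ideal.Quotient.mk (span {m}) (w + n * r)) := by
  obtain ⟨r, hr⟩ := hsr w n m hm h
  exact ⟨r, isUnit_mk_of_isRelPrime hr⟩

theorem HasStableRange15.associated_of_dvd_dvd [IsDomain R] (hsr : HasStableRange15 R) {m : R}
    (hm : m ≠ 0) {x y : R ⧸ span {m}} (hxy : x ∣ y) (hyx : y ∣ x) : Associated x y := by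
  obtain ⟨c, rfl⟩ := hxy
  obtain ⟨c', hc'⟩ := hyx
  obtain ⟨a, rfl⟩ := Ideal.Quotient.mk_surjective x
  obtain ⟨w, rfl⟩ := Ideal.Quotient.mk_surjective c
  obtain ⟨w', rfl⟩ := Ideal.Quotient.mk_surjective c'
  obtain ⟨n, hn⟩ := exists_forall_mk_mul_mk_eq_zero_iff_dvd hm a
  have hn_dvd : n ∣ 1 - w * w' := (hn _).1 <| by
    rw [map_sub, map_one, map_mul, mul_sub, mul_one, ← mul_assoc, ← hc', sub_self]
  obtain ⟨r, hr⟩ := hsr.exists_isUnit_mk_add hm (w := w) (n := n) fun d hdw hdn _ =>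
    isUnit_of_dvd_one <| by simpa using (hdw.mul_right w').add (hdn.trans hn_dvd)
  refine ⟨hr.unit, ?_⟩
  rw [IsUnit.unit_spec, map_add, map_mul, mul_add, ← mul_assoc, (hn n).2 dvd_rfl, zero_mul,
    add_zero]

end Quotient

theorem mul_generating_solutions_general
    {R : Type*} [CommRing R] [IsDomain R] [IsBezout R]
    (hsr : HasStableRange15 R)
    (m : R) (hm0 : m ≠ 0)
    (φ₁ φ₂ φ₃ : R ⧸ Ideal.span {m})
    (ψ₂₁ : R ⧸ Ideal.span {m}) (hψ₂₁ : φ₂ = φ₁ * ψ₂₁)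
    (hψ₂₁gen : ∀ x : R ⧸ Ideal.span {m}, φ₂ = φ₁ * x → ψ₂₁ ∣ x)
    (ψ₃₂ : R ⧸ Ideal.span {m}) (hψ₃₂ : φ₃ = φ₂ * ψ₃₂)
    (hψ₃₂gen : ∀ x : R ⧸ Ideal.span {m}, φ₃ = φ₂ * x → ψ₃₂ ∣ x) :
    (φ₃ = φ₁ * (ψ₂₁ * ψ₃₂) ∧
      ∀ x : R ⧸ Ideal.span {m}, φ₃ = φ₁ * x → ψ₂₁ * ψ₃₂ ∣ x) ∧
    ∀ ψ₃₁ : R ⧸ Ideal.span {m},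
      φ₃ = φ₁ * ψ₃₁ → (∀ x : R ⧸ Ideal.span {m}, φ₃ = φ₁ * x → ψ₃₁ ∣ x) →
      ∃ e : (R ⧸ Ideal.span {m})ˣ, ψ₂₁ * ψ₃₂ = ψ₃₁ * e := by
  have hprod : IsGeneratingSolution φ₁ φ₃ (ψ₂₁ * ψ₃₂) :=
    IsGeneratingSolution.mul ⟨hψ₂₁, hψ₂₁gen⟩ ⟨hψ₃₂, hψ₃₂gen⟩
  refine ⟨hprod, fun ψ₃₁ hψ₃₁ hψ₃₁gen => ?_⟩
  obtain ⟨e, he⟩ := hsr.associated_of_dvd_dvd hm0 (hψ₃₁gen _ hprod.1) (hprod.2 _ hψ₃₁)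
  exact ⟨e, he.symm⟩

/-- The product of generating solutions of `φ₂ = φ₁ * x` and `φ₃ = φ₂ * x` is a
generating solution of `φ₃ = φ₁ * x`; in particular it differs from any generating
solution of `φ₃ = φ₁ * x` by a unit factor. -/
theorem mul_generating_solutions
    {R : Type*} [CommRing R] [IsDomain R] [IsBezout R]
    (hsr : HasStableRange15 R)
    (m : R) (hm0 : m ≠ 0) (hmu : ¬ IsUnit m)
    (φ₁ φ₂ φ₃ : R ⧸ Ideal.span {m})
    (h12 : φ₁ ∣ φ₂) (h23 : φ₂ ∣ φ₃) (h3 : φ₃ ≠ 0)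
    (ψ₂₁ : R ⧸ Ideal.span {m}) (hψ₂₁ : φ₂ = φ₁ * ψ₂₁)
    (hψ₂₁gen : ∀ x : R ⧸ Ideal.span {m}, φ₂ = φ₁ * x → ψ₂₁ ∣ x)
    (ψ₃₂ : R ⧸ Ideal.span {m}) (hψ₃₂ : φ₃ = φ₂ * ψ₃₂)
    (hψ₃₂gen : ∀ x : R ⧸ Ideal.span {m}, φ₃ = φ₂ * x → ψ₃₂ ∣ x) :
    (φ₃ = φ₁ * (ψ₂₁ * ψ₃₂) ∧
      ∀ x : R ⧸ Ideal.span {m}, φ₃ = φ₁ * x → ψ₂₁ * ψ₃₂ ∣ x) ∧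
    ∀ ψ₃₁ : R ⧸ Ideal.span {m},
      φ₃ = φ₁ * ψ₃₁ → (∀ x : R ⧸ Ideal.span {m}, φ₃ = φ₁ * x → ψ₃₁ ∣ x) →
      ∃ e : (R ⧸ Ideal.span {m})ˣ, ψ₂₁ * ψ₃₂ = ψ₃₁ * e :=
  mul_generating_solutions_general hsr m hm0 φ₁ φ₂ φ₃ ψ₂₁ hψ₂₁ hψ₂₁gen ψ₃₂ hψ₃₂ hψ₃₂gen
end

section
/- Let R be a commutative Bézout domain of stable range 1.5, m ∈ R neither zero nor a unit, and R_m = R/mR, with x̄ the image of x ∈ R in R_m. Let a, b ∈ R with b̄ ∣ ā in R_m. Let μ_a = gcd(a, m) and μ_b = gcd(b, m) in R, and let α_a, α_b ∈ R be the elements with m = μ_a·α_a and m = μ_b·α_b. Then for any generating solution ψ of the equation ā = b̄·x in R_m and any generating solution χ of the equation ᾱ_b = ᾱ_a·x in R_m, there exists a unit e of R_m such that ψ = χ·e. -/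
section

variable {R : Type*} [CommRing R]

theorem Ideal.Quotient.mk_eq_mk_mul_mk_iff {m a b x : R} :
    mk (span {m}) a = mk (span {m}) b * mk (span {m}) x ↔ m ∣ a - b * x := by
  rw [← map_mul, mk_eq_mk_iff_sub_mem, mem_span_singleton]

theorem Ideal.Quotient.isUnit_mk_of_isCoprime_s11 {m y : R} (h : IsCoprime y m) :
    IsUnit (mk (span {m}) y) := by
  obtain ⟨u, v, huv⟩ := h
  refine IsUnit.of_mul_eq_one_right (mk _ u) ?_
  rw [← map_mul, ← map_one (mk _), mk_eq_mk_iff_sub_mem, mem_span_singleton]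
  exact ⟨-v, by linear_combination huv⟩

theorem Ideal.Quotient.dvd_of_mk_eq_mk_mul {m a b d : R} {x : R ⧸ span {m}}
    (hx : mk (span {m}) a = mk (span {m}) b * x) (hb : d ∣ b) (hm : d ∣ m) : d ∣ a := by
  obtain ⟨p, rfl⟩ := mk_surjective x
  rw [mk_eq_mk_mul_mk_iff] at hx
  simpa using dvd_add (hm.trans hx) (hb.mul_right p)

theorem Ideal.Quotient.mk_dvd_of_mk_eq_mk_mul [IsDomain R] {m a ν b δ : R} {x : R ⧸ span {m}}
    (hν : ν ≠ 0) (ha : ν * δ ∣ a) (hm : ν * δ ∣ m) (hδb : IsCoprime δ b)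
    (hx : mk (span {m}) a = mk (span {m}) (ν * b) * x) : mk (span {m}) δ ∣ x := by
  obtain ⟨p, rfl⟩ := mk_surjective x
  rw [mk_eq_mk_mul_mk_iff] at hx
  have hνδ : ν * δ ∣ ν * (b * p) := by
    simpa [mul_assoc] using dvd_sub ha (hm.trans hx)
  exact map_dvd _ (hδb.dvd_of_dvd_mul_left ((mul_dvd_mul_iff_left hν).mp hνδ))

theorem isRelPrime_of_forall_dvd_dvd {α : Type*} [CommMonoidWithZero α] [IsCancelMulZero α]
    {m μ a n : α} (hμ : μ ≠ 0) (hm : m = μ * n) (hgcd : ∀ x, x ∣ μ * a → x ∣ m → x ∣ μ) :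
    IsRelPrime a n := by
  intro d hda hdn
  have hμd : μ * d ∣ μ * 1 := by
    rw [mul_one]
    exact hgcd _ (mul_dvd_mul_left μ hda) (hm ▸ mul_dvd_mul_left μ hdn)
  exact isUnit_of_dvd_one ((mul_dvd_mul_iff_left hμ).mp hμd)

namespace HasStableRange15

variable [IsBezout R]

theorem exists_isCoprime_add_mul (hsr : HasStableRange15 R) {a b c : R} (hc : c ≠ 0)
    (hab : IsCoprime a b) : ∃ r, IsCoprime (a + b * r) c := by
  obtain ⟨r, hr⟩ := hsr a b c hc fun d hda hdb _ => hab.isRelPrime hda hdb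
  exact ⟨r, IsRelPrime.isCoprime fun d hd hdc => hr d hd hdc⟩

theorem exists_isCoprime_dvd_sub_mul (hsr : HasStableRange15 R) {m a b n : R} (hm : m ≠ 0)
    (ha : IsCoprime a n) (hb : IsCoprime b n) : ∃ y, n ∣ a - b * y ∧ IsCoprime y m := by
  obtain ⟨u, v, huv⟩ := hb
  have hu : IsCoprime u n := ⟨b, v, by linear_combination huv⟩
  obtain ⟨r, hr⟩ := hsr.exists_isCoprime_add_mul hm (hu.mul_left ha)
  exact ⟨u * a + n * r, ⟨a * v - b * r, by linear_combination (-a) * huv⟩, hr⟩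

theorem associated_of_dvd_dvd_s11 (hsr : HasStableRange15 R) {m : R} (hm : m ≠ 0)
    {x y : R ⧸ Ideal.span {m}} (hxy : x ∣ y) (hyx : y ∣ x) : Associated x y := by
  obtain ⟨s, hs⟩ := hxy
  obtain ⟨t, ht⟩ := hyx
  obtain ⟨S, rfl⟩ := Ideal.Quotient.mk_surjective s
  obtain ⟨T, rfl⟩ := Ideal.Quotient.mk_surjective t
  obtain ⟨r, hr⟩ := hsr.exists_isCoprime_add_mul hm (⟨T, 1, by ring⟩ : IsCoprime S (1 - T * S))
  -- `x * (1 - T * S) = 0`, so the unit `S + (1 - T * S) * r` still carries `x` to `y`.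
  refine ⟨(Ideal.Quotient.isUnit_mk_of_isCoprime_s11 hr).unit, ?_⟩
  simp only [IsUnit.unit_spec, map_add, map_mul, map_sub, map_one]
  set mk := Ideal.Quotient.mk (Ideal.span {m})
  linear_combination (mk r * mk T - 1) * hs + mk r * ht

end HasStableRange15

end

theorem generating_solution_eq_cogcd_generating_solution_mul_unit_general
    {R : Type*} [CommRing R] [IsDomain R] [IsBezout R]
    (hsr : HasStableRange15 R)
    (m : R) (hm0 : m ≠ 0)
    (a b : R)
    (μa : R) (hμa1 : μa ∣ a) (hμa3 : ∀ x : R, x ∣ a → x ∣ m → x ∣ μa)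
    (μb : R) (hμb1 : μb ∣ b) (hμb3 : ∀ x : R, x ∣ b → x ∣ m → x ∣ μb)
    (αa : R) (hαa : m = μa * αa)
    (αb : R) (hαb : m = μb * αb)
    (ψ : R ⧸ Ideal.span {m})
    (hψ : Ideal.Quotient.mk (Ideal.span {m}) a = Ideal.Quotient.mk (Ideal.span {m}) b * ψ)
    (hψgen : ∀ x : R ⧸ Ideal.span {m},
      Ideal.Quotient.mk (Ideal.span {m}) a = Ideal.Quotient.mk (Ideal.span {m}) b * x →
        ψ ∣ x)
    (χ : R ⧸ Ideal.span {m})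
    (hχ : Ideal.Quotient.mk (Ideal.span {m}) αb = Ideal.Quotient.mk (Ideal.span {m}) αa * χ)
    (hχgen : ∀ x : R ⧸ Ideal.span {m},
      Ideal.Quotient.mk (Ideal.span {m}) αb = Ideal.Quotient.mk (Ideal.span {m}) αa * x →
        χ ∣ x) :
    ∃ e : (R ⧸ Ideal.span {m})ˣ, ψ = χ * e := by
  obtain ⟨a', rfl⟩ := hμa1
  obtain ⟨b', rfl⟩ := hμb1
  have hμa0 : μa ≠ 0 := left_ne_zero_of_mul (hαa ▸ hm0)
  have hμb0 : μb ≠ 0 := left_ne_zero_of_mul (hαb ▸ hm0)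
  have hαa0 : αa ≠ 0 := right_ne_zero_of_mul (hαa ▸ hm0)
  obtain ⟨δ, rfl⟩ : μb ∣ μa :=
    hμa3 μb (Ideal.Quotient.dvd_of_mk_eq_mk_mul hψ (dvd_mul_right _ _) ⟨αb, hαb⟩) ⟨αb, hαb⟩
  have hαbδ : αb = δ * αa := mul_left_cancel₀ hμb0 (by rw [← hαb, hαa]; ring)
  have hb'αb : IsCoprime b' αb := (isRelPrime_of_forall_dvd_dvd hμb0 hαb hμb3).isCoprime
  have hδb' : IsCoprime δ b' := (hb'αb.of_isCoprime_of_dvd_right ⟨αa, hαbδ⟩).symm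
  have hb'αa : IsCoprime b' αa := hb'αb.of_isCoprime_of_dvd_right ⟨δ, hαbδ.trans (mul_comm _ _)⟩
  have ha'αa : IsCoprime a' αa := (isRelPrime_of_forall_dvd_dvd hμa0 hαa hμa3).isCoprime
  obtain ⟨y, hy, hym⟩ := hsr.exists_isCoprime_dvd_sub_mul hm0 ha'αa hb'αa
  have hδψ : Ideal.Quotient.mk _ δ ∣ ψ :=
    Ideal.Quotient.mk_dvd_of_mk_eq_mk_mul hμb0 (dvd_mul_right _ _) ⟨αa, hαa⟩ hδb' hψ
  have hψδ : ψ ∣ Ideal.Quotient.mk _ δ := by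
    have hsol : m ∣ μb * δ * a' - μb * b' * (δ * y) := by
      rw [hαa]
      convert mul_dvd_mul_left (μb * δ) hy using 1
      ring
    rw [← (Ideal.Quotient.isUnit_mk_of_isCoprime_s11 hym).dvd_mul_right, ← map_mul]
    exact hψgen _ (Ideal.Quotient.mk_eq_mk_mul_mk_iff.mpr hsol)
  have hχδ : χ ∣ Ideal.Quotient.mk _ δ := hχgen _ (by rw [hαbδ, map_mul, mul_comm])
  have hδχ : Ideal.Quotient.mk _ δ ∣ χ := by
    refine Ideal.Quotient.mk_dvd_of_mk_eq_mk_mul hαa0 (a := αb) ⟨1, by rw [hαbδ]; ring⟩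
      ⟨μb, by rw [hαa]; ring⟩ isCoprime_one_right ?_
    rw [mul_one]
    exact hχ
  obtain ⟨e, he⟩ := hsr.associated_of_dvd_dvd_s11 hm0 (hχδ.trans hδψ) (hψδ.trans hδχ)
  exact ⟨e, he.symm⟩

/-- If `b̄ ∣ ā` in `R/mR`, `μ_a = gcd(a, m)`, `μ_b = gcd(b, m)`, `m = μ_a * α_a`, and
`m = μ_b * α_b`, then every generating solution of `ā = b̄ * x` equals a generating
solution of `ᾱ_b = ᾱ_a * x` times a unit. -/
theorem generating_solution_eq_cogcd_generating_solution_mul_unit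
    {R : Type*} [CommRing R] [IsDomain R] [IsBezout R]
    (hsr : HasStableRange15 R)
    (m : R) (hm0 : m ≠ 0) (hmu : ¬ IsUnit m)
    (a b : R)
    (hdvd : Ideal.Quotient.mk (Ideal.span {m}) b ∣ Ideal.Quotient.mk (Ideal.span {m}) a)
    (μa : R) (hμa1 : μa ∣ a) (hμa2 : μa ∣ m) (hμa3 : ∀ x : R, x ∣ a → x ∣ m → x ∣ μa)
    (μb : R) (hμb1 : μb ∣ b) (hμb2 : μb ∣ m) (hμb3 : ∀ x : R, x ∣ b → x ∣ m → x ∣ μb)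
    (αa : R) (hαa : m = μa * αa)
    (αb : R) (hαb : m = μb * αb)
    (ψ : R ⧸ Ideal.span {m})
    (hψ : Ideal.Quotient.mk (Ideal.span {m}) a = Ideal.Quotient.mk (Ideal.span {m}) b * ψ)
    (hψgen : ∀ x : R ⧸ Ideal.span {m},
      Ideal.Quotient.mk (Ideal.span {m}) a = Ideal.Quotient.mk (Ideal.span {m}) b * x →
        ψ ∣ x)
    (χ : R ⧸ Ideal.span {m})
    (hχ : Ideal.Quotient.mk (Ideal.span {m}) αb = Ideal.Quotient.mk (Ideal.span {m}) αa * χ)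
    (hχgen : ∀ x : R ⧸ Ideal.span {m},
      Ideal.Quotient.mk (Ideal.span {m}) αb = Ideal.Quotient.mk (Ideal.span {m}) αa * x →
        χ ∣ x) :
    ∃ e : (R ⧸ Ideal.span {m})ˣ, ψ = χ * e :=
  generating_solution_eq_cogcd_generating_solution_mul_unit_general hsr m hm0 a b μa hμa1 hμa3 μb
    hμb1 hμb3 αa hαa αb hαb ψ hψ hψgen χ hχ hχgen
end

section
/- Let S be a commutative ring, n ≥ 2, and let ψ_{ij} ∈ S for 1 ≤ j < i ≤ n be elements satisfying: for every permutation σ of {1, …, n}, the product over all i with σ(i) < i of ψ_{i,σ(i)} equals the product over all i with σ(i) > i of ψ_{σ(i),i}. Then for arbitrary elements h_{ij} ∈ S (1 ≤ i, j ≤ n), the determinant of the n×n matrix A with entries A_{ij} = ψ_{ij}·h_{ij} for i > j and A_{ij} = h_{ij} for i ≤ j equals the determinant of the n×n matrix B with entries B_{ij} = ψ_{ji}·h_{ij} for i < j and B_{ij} = h_{ij} for i ≥ j. -/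
/-! Both matrices are Hadamard products `c ⊙ h` whose factor `c` is `ψ` on one side of the
diagonal and `1` elsewhere. The Leibniz term of `σ` in `det (c ⊙ h)` is `∏ c (σ i) i` times
the corresponding term of `det h`, and the permutation identity says exactly that these
products agree for the two factors. -/

open Matrix

theorem Matrix.det_hadamard_eq_of_prod_perm_eq {n R : Type*} [Fintype n] [DecidableEq n]
    [CommRing R] {c d : Matrix n n R} (hcd : ∀ σ : Equiv.Perm n, ∏ i, c (σ i) i = ∏ i, d (σ i) i)
    (h : Matrix n n R) : det (c ⊙ h) = det (d ⊙ h) := by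
  simp only [det_apply, hadamard_apply, Finset.prod_mul_distrib, hcd]

theorem Matrix.of_ite_mul_eq_hadamard {n R : Type*} [MulOneClass R] (p : n → n → Prop)
    [DecidableRel p] (ψ h : n → n → R) :
    of (fun i j => if p i j then ψ i j * h i j else h i j) =
      of (fun i j => if p i j then ψ i j else 1) ⊙ of h := by
  ext i j
  simp only [of_apply, hadamard_apply]
  split_ifs <;> simp

theorem det_lower_psi_eq_det_upper_psi_general
    {S : Type*} [CommRing S] (n : ℕ)
    (ψ : Fin n → Fin n → S)
    (hψ : ∀ σ : Equiv.Perm (Fin n),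
      ∏ i ∈ Finset.univ.filter (fun i : Fin n => σ i < i), ψ i (σ i) =
        ∏ i ∈ Finset.univ.filter (fun i : Fin n => i < σ i), ψ (σ i) i)
    (h : Fin n → Fin n → S) :
    Matrix.det (Matrix.of fun i j : Fin n => if j < i then ψ i j * h i j else h i j) =
      Matrix.det (Matrix.of fun i j : Fin n => if i < j then ψ j i * h i j else h i j) := by
  rw [of_ite_mul_eq_hadamard (fun i j => j < i), of_ite_mul_eq_hadamard (fun i j => i < j)]
  refine det_hadamard_eq_of_prod_perm_eq (fun σ => ?_) _
  simp only [of_apply, ← Finset.prod_filter]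
  exact (hψ σ).symm

/-- If the elements `ψ i j` (used for `j < i`) satisfy the permutation identity
(for every permutation `σ`, the product of `ψ i (σ i)` over `i` with `σ(i) < i`
equals the product of `ψ (σ i) i` over `i` with `σ(i) > i`), then multiplying the
strictly lower triangular entries of a matrix by the `ψ`'s gives the same determinant
as multiplying the strictly upper triangular entries by the transposed `ψ`'s. -/
theorem det_lower_psi_eq_det_upper_psi
    {S : Type*} [CommRing S] (n : ℕ) (hn : 2 ≤ n)
    (ψ : Fin n → Fin n → S)
    (hψ : ∀ σ : Equiv.Perm (Fin n),
      ∏ i ∈ Finset.univ.filter (fun i : Fin n => σ i < i), ψ i (σ i) =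
        ∏ i ∈ Finset.univ.filter (fun i : Fin n => i < σ i), ψ (σ i) i)
    (h : Fin n → Fin n → S) :
    Matrix.det (Matrix.of fun i j : Fin n => if j < i then ψ i j * h i j else h i j) =
      Matrix.det (Matrix.of fun i j : Fin n => if i < j then ψ j i * h i j else h i j) :=
  det_lower_psi_eq_det_upper_psi_general n ψ hψ h
end

section
/- Let S be a commutative ring, n ≥ 1, Φ an n×n matrix over S, and Υ an invertible diagonal n×n matrix over S. Then the Zelisko group of Φ·Υ equals the Zelisko group of Φ, i.e., G_{Φ·Υ} = G_Φ. -/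
/-- The Zelisko group of a square matrix `Φ` over a commutative ring: the set of
invertible matrices `H` for which there exists an invertible matrix `T` with
`H * Φ = Φ * T`. -/
def zeliskoGroup {S : Type*} [CommRing S] {n : ℕ} (Φ : Matrix (Fin n) (Fin n) S) :
    Set (Matrix (Fin n) (Fin n) S) :=
  {H | IsUnit H ∧ ∃ T : Matrix (Fin n) (Fin n) S, IsUnit T ∧ H * Φ = Φ * T}

/-! If `H * Φ = Φ * T` then `H * (Φ * U) = (Φ * U) * (U⁻¹ * T * U)`: right multiplication of `Φ`
by an invertible `U` only conjugates the witness `T`, and `U⁻¹` undoes it. -/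

section

variable {S : Type*} [CommRing S] {n : ℕ}

theorem zeliskoGroup_subset_mul_of_isUnit (Φ : Matrix (Fin n) (Fin n) S)
    {U : Matrix (Fin n) (Fin n) S} (hU : IsUnit U) : zeliskoGroup Φ ⊆ zeliskoGroup (Φ * U) := by
  have hUdet : IsUnit U.det := U.isUnit_iff_isUnit_det.mp hU
  rintro H ⟨hH, T, hT, hHT⟩
  refine ⟨hH, U⁻¹ * T * U, (Matrix.isUnit_nonsing_inv_iff.mpr hU |>.mul hT).mul hU, ?_⟩
  calc H * (Φ * U) = Φ * T * U := by rw [← mul_assoc, hHT]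
    _ = Φ * U * (U⁻¹ * T * U) := by
      rw [mul_assoc Φ U, ← mul_assoc U, U.mul_nonsing_inv_cancel_left T hUdet, mul_assoc]

theorem zeliskoGroup_mul_of_isUnit (Φ : Matrix (Fin n) (Fin n) S)
    {U : Matrix (Fin n) (Fin n) S} (hU : IsUnit U) : zeliskoGroup (Φ * U) = zeliskoGroup Φ := by
  refine subset_antisymm ?_ (zeliskoGroup_subset_mul_of_isUnit Φ hU)
  have hUinv : IsUnit U⁻¹ := Matrix.isUnit_nonsing_inv_iff.mpr hU
  simpa only [U.mul_nonsing_inv_cancel_right Φ (U.isUnit_iff_isUnit_det.mp hU)] using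
    zeliskoGroup_subset_mul_of_isUnit (Φ * U) hUinv

end

theorem zeliskoGroup_mul_diagonal_unit_general
    {S : Type*} [CommRing S] (n : ℕ)
    (Φ : Matrix (Fin n) (Fin n) S)
    (d : Fin n → S) (hd : IsUnit (Matrix.diagonal d)) :
    zeliskoGroup (Φ * Matrix.diagonal d) = zeliskoGroup Φ :=
  zeliskoGroup_mul_of_isUnit Φ hd

/-- Multiplying `Φ` on the right by an invertible diagonal matrix does not change its
Zelisko group. -/
theorem zeliskoGroup_mul_diagonal_unit
    {S : Type*} [CommRing S] (n : ℕ) (hn : 1 ≤ n)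
    (Φ : Matrix (Fin n) (Fin n) S)
    (d : Fin n → S) (hd : IsUnit (Matrix.diagonal d)) :
    zeliskoGroup (Φ * Matrix.diagonal d) = zeliskoGroup Φ :=
  zeliskoGroup_mul_diagonal_unit_general n Φ d hd
end
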